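/- Let η ∈ ℂ and set τ[5] = (t₁, t₂, t₃, t₄, t₅, t₇) = (−70η, −10395η², 402570η³, 13063680η⁴, −838688256η⁵, 161243136000η⁷). Then the surface f_{τ[5]} = 0 has singular points at the two points (−1728η², −139968η³, 0) and (3375η², −109350η³, 0): at each of these points f_{τ[5]} and its three partial derivatives ∂f_{τ[5]}/∂x, ∂f_{τ[5]}/∂y, ∂f_{τ[5]}/∂z all vanish. -/
import Mathlib


/-- The family `f_τ(x,y,z) = f̃_{(0,τ)}(x,y,z)`. -/
def fF (t1 t2 t3 t4 t5 t7 x y z : ℂ) : ℂ :=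
  y ^ 3 + x ^ 3 * y + t7 * x + t5 * x ^ 2 + t3 * x ^ 3 + t1 * x ^ 4 +
    y * (t4 * x + t2 * x ^ 2) - z ^ 2

/-- `∂f_τ/∂x`. -/
def fF_x (t1 t2 t3 t4 t5 t7 x y _z : ℂ) : ℂ :=
  3 * x ^ 2 * y + t7 + 2 * t5 * x + 3 * t3 * x ^ 2 + 4 * t1 * x ^ 3 +
    y * (t4 + 2 * t2 * x)

/-- `∂f_τ/∂y`. -/
def fF_y (_t1 t2 _t3 t4 _t5 _t7 x y _z : ℂ) : ℂ :=
  3 * y ^ 2 + x ^ 3 + t4 * x + t2 * x ^ 2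

/-- `∂f_τ/∂z`. -/
def fF_z (_t1 _t2 _t3 _t4 _t5 _t7 _x _y z : ℂ) : ℂ := -2 * z

/-- Case ST34(5): at `τ[5]` the surface `f_{τ[5]} = 0` is singular at the two points
`(−1728η², −139968η³, 0)` and `(3375η², −109350η³, 0)`. -/
theorem fF_tau5_singular_points (η : ℂ) :
    ∀ P : ℂ × ℂ × ℂ,
      (P = (-1728 * η ^ 2, -139968 * η ^ 3, 0) ∨
        P = (3375 * η ^ 2, -109350 * η ^ 3, 0)) →
      fF (-70 * η) (-10395 * η ^ 2) (402570 * η ^ 3) (13063680 * η ^ 4)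
          (-838688256 * η ^ 5) (161243136000 * η ^ 7) P.1 P.2.1 P.2.2 = 0 ∧
      fF_x (-70 * η) (-10395 * η ^ 2) (402570 * η ^ 3) (13063680 * η ^ 4)
          (-838688256 * η ^ 5) (161243136000 * η ^ 7) P.1 P.2.1 P.2.2 = 0 ∧
      fF_y (-70 * η) (-10395 * η ^ 2) (402570 * η ^ 3) (13063680 * η ^ 4)
          (-838688256 * η ^ 5) (161243136000 * η ^ 7) P.1 P.2.1 P.2.2 = 0 ∧
      fF_z (-70 * η) (-10395 * η ^ 2) (402570 * η ^ 3) (13063680 * η ^ 4)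
          (-838688256 * η ^ 5) (161243136000 * η ^ 7) P.1 P.2.1 P.2.2 = 0 := by
  rintro P (rfl | rfl) <;>
    refine ⟨?_, ?_, ?_, ?_⟩ <;> simp only [fF, fF_x, fF_y, fF_z] <;> ring
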